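/- (F1e) Let 0 < k < 1 and k' = √(1−k²). Then there exists θ₁ with 1 < θ₁ < 4 such that K(k) = ln(4/k') + (k'²/(4−k'²))·ln(θ₁/k'). -/

import Mathlib

open MeasureTheory Real


noncomputable def RF (x y z : ℝ) : ℝ :=
  (1/2) * ∫ t in Set.Ioi (0:ℝ), ((t+x)*(t+y)*(t+z)) ^ (-(1/2) : ℝ)

/-- Legendre's complete elliptic integral of the first kind. -/
noncomputable def K (k : ℝ) : ℝ := RF 0 (1 - k^2) 1

section Helpers
open Set Filter Topology


lemma pair_deriv {a b : ℝ} (hb : 0 < b) (hba : b < a) {t : ℝ} (ht : 0 ≤ t) :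
    HasDerivAt (fun t => (Real.log (t+b) - Real.log (t+a))/(a-b)) (((t+a)*(t+b))⁻¹) t := by
  have ha : 0 < a := lt_trans hb hba
  have hb' : (0:ℝ) < t + b := by linarith
  have ha' : (0:ℝ) < t + a := by linarith
  have h1 : HasDerivAt (fun t : ℝ => Real.log (t+b)) (t+b)⁻¹ t := by
    simpa using (((hasDerivAt_id t).add_const b).log (ne_of_gt hb'))
  have h2 : HasDerivAt (fun t : ℝ => Real.log (t+a)) (t+a)⁻¹ t := by
    simpa using (((hasDerivAt_id t).add_const a).log (ne_of_gt ha'))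
  have h3 := (h1.sub h2).div_const (a-b)
  have : ((t+b)⁻¹ - (t+a)⁻¹)/(a-b) = ((t+a)*(t+b))⁻¹ := by
    rw [div_eq_iff (by linarith : a - b ≠ 0)]
    field_simp
    ring_nf
  rwa [this] at h3

lemma pair_tendsto {a b : ℝ} (hb : 0 < b) (hba : b < a) :
    Tendsto (fun t => (Real.log (t+b) - Real.log (t+a))/(a-b)) atTop (𝓝 0) := by
  have ha : 0 < a := lt_trans hb hba
  have h1 : Tendsto (fun t : ℝ => (t+b)/(t+a)) atTop (𝓝 1) := by
    have he : (fun t : ℝ => (1:ℝ) + (b-a)/(t+a)) =ᶠ[atTop] (fun t : ℝ => (t+b)/(t+a)) := by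
      filter_upwards [eventually_gt_atTop 0] with t ht
      have : (0:ℝ) < t + a := by linarith
      field_simp
      ring
    rw [← tendsto_congr' he]
    have h0 : Tendsto (fun t : ℝ => (b-a)/(t+a)) atTop (𝓝 0) :=
      Tendsto.div_atTop tendsto_const_nhds (tendsto_atTop_add_const_right _ a tendsto_id)
    simpa using (tendsto_const_nhds.add h0)
  have h2 : Tendsto (fun t : ℝ => Real.log ((t+b)/(t+a))) atTop (𝓝 0) := by
    have := (Real.continuousAt_log (by norm_num : (1:ℝ) ≠ 0)).tendsto.comp h1
    simpa [Function.comp_def] using this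
  have h3 : (fun t : ℝ => Real.log ((t+b)/(t+a))) =ᶠ[atTop]
      (fun t : ℝ => Real.log (t+b) - Real.log (t+a)) := by
    filter_upwards [eventually_gt_atTop 0] with t ht
    rw [Real.log_div (by positivity) (by positivity)]
  rw [tendsto_congr' h3] at h2
  simpa using h2.div_const (a-b)

lemma pair_intOn {a b : ℝ} (hb : 0 < b) (hba : b < a) :
    IntegrableOn (fun t => ((t+a)*(t+b))⁻¹) (Set.Ioi 0) :=
  integrableOn_Ioi_deriv_of_nonneg
    (((pair_deriv hb hba le_rfl).continuousAt).continuousWithinAt)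
    (fun x hx => pair_deriv hb hba (le_of_lt hx))
    (fun x hx => by
      have ha : 0 < a := lt_trans hb hba
      have : (0:ℝ) < x := hx
      positivity) (pair_tendsto hb hba)

lemma pair_integral {a b : ℝ} (hb : 0 < b) (hba : b < a) :
    ∫ t in Set.Ioi (0:ℝ), ((t+a)*(t+b))⁻¹ = (Real.log a - Real.log b)/(a-b) := by
  have ha : 0 < a := lt_trans hb hba
  have := integral_Ioi_of_hasDerivAt_of_nonneg
    (((pair_deriv hb hba le_rfl).continuousAt).continuousWithinAt)
    (fun x hx => pair_deriv hb hba (le_of_lt hx))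
    (fun x hx => by
      have : (0:ℝ) < x := hx
      positivity) (pair_tendsto hb hba)
  rw [this]
  rw [zero_sub, zero_add, zero_add, ← neg_div, neg_sub]


noncomputable def phi (c : ℝ) : ℝ → ℝ :=
  fun t => 2*Real.log (Real.sqrt t + Real.sqrt (t+c)) - 2*Real.log (Real.sqrt (t+1) + 1)

noncomputable def f1 (c : ℝ) : ℝ → ℝ :=
  fun t => (Real.sqrt (t*(t+c)))⁻¹ - (t+1+Real.sqrt (t+1))⁻¹

lemma phi_deriv {c : ℝ} (hc : 0 < c) {t : ℝ} (ht : 0 < t) :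
    HasDerivAt (phi c) (f1 c t) t := by
  have htc : (0:ℝ) < t + c := by linarith
  have ht1 : (0:ℝ) < t + 1 := by linarith
  have hst : 0 < Real.sqrt t := Real.sqrt_pos.2 ht
  have hstc : 0 < Real.sqrt (t+c) := Real.sqrt_pos.2 htc
  have hst1 : 0 < Real.sqrt (t+1) := Real.sqrt_pos.2 ht1
  have h1 : HasDerivAt Real.sqrt (1/(2*Real.sqrt t)) t := Real.hasDerivAt_sqrt (ne_of_gt ht)
  have h2 : HasDerivAt (fun t : ℝ => Real.sqrt (t+c)) (1/(2*Real.sqrt (t+c))) t := by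
    simpa [Function.comp_def] using (Real.hasDerivAt_sqrt (ne_of_gt htc)).comp t ((hasDerivAt_id t).add_const c)
  have h3 : HasDerivAt (fun t : ℝ => Real.sqrt (t+1)) (1/(2*Real.sqrt (t+1))) t := by
    simpa [Function.comp_def] using (Real.hasDerivAt_sqrt (ne_of_gt ht1)).comp t ((hasDerivAt_id t).add_const 1)
  have h4 : HasDerivAt (fun t : ℝ => Real.log (Real.sqrt t + Real.sqrt (t+c)))
      ((1/(2*Real.sqrt t) + 1/(2*Real.sqrt (t+c)))/(Real.sqrt t + Real.sqrt (t+c))) t := by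
    have := ((h1.add h2).log (ne_of_gt (add_pos hst hstc)))
    simpa [div_eq_mul_inv] using this
  have h5 : HasDerivAt (fun t : ℝ => Real.log (Real.sqrt (t+1) + 1))
      ((1/(2*Real.sqrt (t+1)))/(Real.sqrt (t+1) + 1)) t := by
    have := ((h3.add_const 1).log (by positivity))
    simpa [div_eq_mul_inv] using this
  have h6 := ((h4.const_mul 2).sub (h5.const_mul 2))
  have heq : 2*((1/(2*Real.sqrt t) + 1/(2*Real.sqrt (t+c)))/(Real.sqrt t + Real.sqrt (t+c)))
      - 2*((1/(2*Real.sqrt (t+1)))/(Real.sqrt (t+1) + 1)) = f1 c t := by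
    have e1 : Real.sqrt (t*(t+c)) = Real.sqrt t * Real.sqrt (t+c) := Real.sqrt_mul ht.le _
    have e2 : Real.sqrt (t+1) * Real.sqrt (t+1) = t+1 := Real.mul_self_sqrt ht1.le
    have i1 : 2*((1/(2*Real.sqrt t) + 1/(2*Real.sqrt (t+c)))/(Real.sqrt t + Real.sqrt (t+c)))
        = (Real.sqrt t * Real.sqrt (t+c))⁻¹ := by
      field_simp
      ring
    have i2 : 2*((1/(2*Real.sqrt (t+1)))/(Real.sqrt (t+1) + 1)) = (t+1+Real.sqrt (t+1))⁻¹ := by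
      rw [show t+1+Real.sqrt (t+1) = Real.sqrt (t+1)*(Real.sqrt (t+1)+1) by
        rw [mul_add, mul_one, e2]]
      field_simp
    rw [f1, e1, i1, i2]
  rw [heq] at h6
  exact h6

lemma phi_cont {c : ℝ} (hc : 0 < c) : ContinuousWithinAt (phi c) (Set.Ici 0) 0 := by
  apply ContinuousAt.continuousWithinAt
  have h1 : ContinuousAt (fun t : ℝ => Real.sqrt t + Real.sqrt (t+c)) 0 := by fun_prop
  have h2 : ContinuousAt (fun t : ℝ => Real.sqrt (t+1) + 1) 0 := by fun_prop
  have hne1 : Real.sqrt 0 + Real.sqrt (0+c) ≠ 0 := by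
    have : 0 < Real.sqrt c := Real.sqrt_pos.2 hc
    have h0 : Real.sqrt 0 = 0 := Real.sqrt_zero
    rw [h0, zero_add]
    positivity
  have hne2 : Real.sqrt (0+1) + 1 ≠ 0 := by norm_num
  exact ((h1.log hne1).const_mul 2).sub ((h2.log hne2).const_mul 2)

lemma phi_zero {c : ℝ} (hc : 0 < c) : phi c 0 = Real.log c - Real.log 4 := by
  have : Real.log (Real.sqrt c) = Real.log c / 2 := Real.log_sqrt hc.le
  simp [phi, Real.sqrt_one, this]
  rw [show (2:ℝ) = Real.sqrt 1 + 1 by rw [Real.sqrt_one]; norm_num]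
  rw [Real.sqrt_one]
  norm_num
  rw [show (4:ℝ) = 2^2 by norm_num, Real.log_pow]
  push_cast
  ring

lemma phi_tendsto {c : ℝ} (hc : 0 < c) : Tendsto (phi c) atTop (𝓝 (Real.log 4)) := by
  set g : ℝ → ℝ := fun u => 2*Real.log ((1+Real.sqrt (1+c*u))/(Real.sqrt (1+u)+Real.sqrt u))
  have hg0 : g 0 = Real.log 4 := by
    simp [g, Real.sqrt_one, Real.sqrt_zero]
    rw [show (1:ℝ)+1 = 2 by norm_num, show (4:ℝ) = 2^2 by norm_num, Real.log_pow]
    push_cast; ring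
  have hgc : ContinuousAt g 0 := by
    have hd : ContinuousAt (fun u : ℝ => (1+Real.sqrt (1+c*u))/(Real.sqrt (1+u)+Real.sqrt u)) 0 := by
      apply ContinuousAt.div (by fun_prop) (by fun_prop)
      norm_num [Real.sqrt_one, Real.sqrt_zero]
    have hne : ((1:ℝ)+Real.sqrt (1+c*0))/(Real.sqrt (1+0)+Real.sqrt 0) ≠ 0 := by
      norm_num [Real.sqrt_one, Real.sqrt_zero]
    exact continuousAt_const.mul (hd.log hne)
  have hcomp : Tendsto (fun t : ℝ => g t⁻¹) atTop (𝓝 (Real.log 4)) := by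
    rw [← hg0]
    exact hgc.tendsto.comp tendsto_inv_atTop_zero
  apply hcomp.congr'
  filter_upwards [eventually_gt_atTop 0] with t ht
  have htc : (0:ℝ) < t + c := by linarith
  have ht1 : (0:ℝ) < t + 1 := by linarith
  have hst : 0 < Real.sqrt t := Real.sqrt_pos.2 ht
  have hst1 : 0 < Real.sqrt (t+1) := Real.sqrt_pos.2 ht1
  have hstc : 0 < Real.sqrt (t+c) := Real.sqrt_pos.2 htc
  have e1 : Real.sqrt (1+c*t⁻¹) = Real.sqrt (t+c) / Real.sqrt t := by
    rw [show (1:ℝ)+c*t⁻¹ = (t+c)/t by field_simp, Real.sqrt_div htc.le]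
  have e2 : Real.sqrt (1+t⁻¹) = Real.sqrt (t+1) / Real.sqrt t := by
    rw [show (1:ℝ)+t⁻¹ = (t+1)/t by field_simp, Real.sqrt_div ht1.le]
  have e3 : Real.sqrt t⁻¹ = 1 / Real.sqrt t := by
    rw [Real.sqrt_inv, one_div]
  have e4 : (1+Real.sqrt (1+c*t⁻¹))/(Real.sqrt (1+t⁻¹)+Real.sqrt t⁻¹)
      = (Real.sqrt t + Real.sqrt (t+c))/(Real.sqrt (t+1)+1) := by
    rw [e1, e2, e3]
    rw [div_eq_div_iff (by positivity) (by positivity)]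
    field_simp
  show g t⁻¹ = phi c t
  simp only [g, phi, e4]
  rw [Real.log_div (by positivity) (by positivity)]
  ring

lemma f1_nonneg {c : ℝ} (hc : 0 < c) (hc1 : c < 1) {t : ℝ} (ht : 0 < t) : 0 ≤ f1 c t := by
  have htc : (0:ℝ) < t + c := by linarith
  have ht1 : (0:ℝ) < t + 1 := by linarith
  have h1 : Real.sqrt (t*(t+c)) ≤ t + 1 := by
    rw [show t+1 = Real.sqrt ((t+1)^2) by rw [Real.sqrt_sq ht1.le]]
    apply Real.sqrt_le_sqrt
    nlinarith
  have h2 : 0 < Real.sqrt (t*(t+c)) := Real.sqrt_pos.2 (by positivity)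
  have h3 : t + 1 ≤ t + 1 + Real.sqrt (t+1) := by
    have := Real.sqrt_nonneg (t+1)
    linarith
  have h4 : (t+1+Real.sqrt (t+1))⁻¹ ≤ (Real.sqrt (t*(t+c)))⁻¹ := by
    apply inv_anti₀ h2
    linarith
  simp only [f1]
  linarith

lemma f1_integral {c : ℝ} (hc : 0 < c) (hc1 : c < 1) :
    IntegrableOn (f1 c) (Set.Ioi 0) ∧
    ∫ t in Set.Ioi (0:ℝ), f1 c t = 2*Real.log 4 - Real.log c := by
  have hint := integrableOn_Ioi_deriv_of_nonneg (phi_cont hc)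
    (fun x hx => phi_deriv hc hx) (fun x hx => f1_nonneg hc hc1 hx) (phi_tendsto hc)
  refine ⟨hint, ?_⟩
  rw [integral_Ioi_of_hasDerivAt_of_nonneg (phi_cont hc)
    (fun x hx => phi_deriv hc hx) (fun x hx => f1_nonneg hc hc1 hx) (phi_tendsto hc),
    phi_zero hc]
  ring

noncomputable def hh (c : ℝ) : ℝ → ℝ :=
  fun t => ((t+1+Real.sqrt (t+1)) * (t+c+Real.sqrt (t*(t+c))))⁻¹

lemma hh_pos {c : ℝ} (hc : 0 < c) {t : ℝ} (ht : 0 < t) : 0 < hh c t := by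
  have h1 : 0 < t+1+Real.sqrt (t+1) := by
    have := Real.sqrt_nonneg (t+1); linarith
  have h2 : 0 < t+c+Real.sqrt (t*(t+c)) := by
    have := Real.sqrt_nonneg (t*(t+c)); linarith
  simp only [hh]
  positivity

lemma hh_ub {c : ℝ} (hc : 0 < c) {t : ℝ} (ht : 0 < t) :
    hh c t ≤ (2:ℝ)⁻¹ * ((t+2)*(t+c/2))⁻¹ := by
  have hs1 : (1:ℝ) ≤ Real.sqrt (t+1) := Real.one_le_sqrt.2 (by linarith)
  have hs2 : t ≤ Real.sqrt (t*(t+c)) := Real.le_sqrt_of_sq_le (by nlinarith)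
  have e : (2:ℝ)⁻¹ * ((t+2)*(t+c/2))⁻¹ = ((t+2)*(2*t+c))⁻¹ := by
    rw [← mul_inv]; congr 1; ring
  rw [e, hh]
  apply inv_anti₀ (by positivity)
  have h1 : t+2 ≤ t+1+Real.sqrt (t+1) := by linarith
  have h2 : 2*t+c ≤ t+c+Real.sqrt (t*(t+c)) := by linarith
  nlinarith

lemma hh_lb {c : ℝ} (hc : 0 < c) {t : ℝ} (ht : 0 < t) :
    (3:ℝ)⁻¹ * ((t+4/3)*(t+3*c/4))⁻¹ ≤ hh c t := by
  have hs1 : Real.sqrt (t+1) ≤ 1 + t/2 := by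
    rw [show 1+t/2 = Real.sqrt ((1+t/2)^2) by rw [Real.sqrt_sq (by linarith)]]
    exact Real.sqrt_le_sqrt (by nlinarith)
  have hs2 : Real.sqrt (t*(t+c)) ≤ t + c/2 := by
    rw [show t+c/2 = Real.sqrt ((t+c/2)^2) by rw [Real.sqrt_sq (by linarith)]]
    exact Real.sqrt_le_sqrt (by nlinarith)
  have e : (3:ℝ)⁻¹ * ((t+4/3)*(t+3*c/4))⁻¹ = ((3/2*t+2)*(2*t+3/2*c))⁻¹ := by
    rw [← mul_inv]; congr 1; ring
  rw [e, hh]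
  apply inv_anti₀
  · have h1 : 0 < t+1+Real.sqrt (t+1) := by
      have := Real.sqrt_nonneg (t+1); linarith
    have h2 : 0 < t+c+Real.sqrt (t*(t+c)) := by
      have := Real.sqrt_nonneg (t*(t+c)); linarith
    positivity
  · have h1 : t+1+Real.sqrt (t+1) ≤ 3/2*t+2 := by linarith
    have h2 : t+c+Real.sqrt (t*(t+c)) ≤ 2*t+3/2*c := by linarith
    have p1 : 0 < t+1+Real.sqrt (t+1) := by
      have := Real.sqrt_nonneg (t+1); linarith
    have p2 : 0 < t+c+Real.sqrt (t*(t+c)) := by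
      have := Real.sqrt_nonneg (t*(t+c)); linarith
    nlinarith

lemma hh_meas {c : ℝ} (hc : 0 < c) : AEStronglyMeasurable (hh c)
    (volume.restrict (Set.Ioi (0:ℝ))) := by
  apply ContinuousOn.aestronglyMeasurable _ measurableSet_Ioi
  apply ContinuousOn.inv₀
  · apply Continuous.continuousOn
    fun_prop
  · intro t ht
    have h1 : 0 < t+1+Real.sqrt (t+1) := by
      have := Real.sqrt_nonneg (t+1); have : (0:ℝ) < t := ht; 
      have := Real.sqrt_nonneg (t+1); linarith
    have h2 : 0 < t+c+Real.sqrt (t*(t+c)) := by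
      have := Real.sqrt_nonneg (t*(t+c)); have : (0:ℝ) < t := ht; linarith
    positivity

lemma hh_intOn {c : ℝ} (hc : 0 < c) (hc1 : c < 1) : IntegrableOn (hh c) (Set.Ioi 0) := by
  have hu : IntegrableOn (fun t => (2:ℝ)⁻¹ * ((t+2)*(t+c/2))⁻¹) (Set.Ioi 0) :=
    (pair_intOn (by linarith) (by linarith)).const_mul _
  apply Integrable.mono' hu (hh_meas hc)
  rw [ae_restrict_iff' measurableSet_Ioi]
  apply ae_of_all
  intro t ht
  rw [Real.norm_of_nonneg (hh_pos hc ht).le]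
  exact hh_ub hc ht

lemma integrand_eq {c : ℝ} (hc : 0 < c) {t : ℝ} (ht : 0 < t) :
    ((t+0)*(t+c)*(t+1)) ^ (-(1/2) : ℝ) = f1 c t + c * hh c t := by
  have htc : (0:ℝ) < t + c := by linarith
  have ht1 : (0:ℝ) < t + 1 := by linarith
  have hx : (0:ℝ) < t*(t+c)*(t+1) := by positivity
  have h0 : ((t+0)*(t+c)*(t+1)) = t*(t+c)*(t+1) := by ring
  rw [h0, Real.rpow_neg hx.le, ← Real.sqrt_eq_rpow,
    Real.sqrt_mul (by positivity : (0:ℝ) ≤ t*(t+c))]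
  set A := Real.sqrt (t*(t+c)) with hAdef
  set B := Real.sqrt (t+1) with hBdef
  have hA : A^2 = t*(t+c) := Real.sq_sqrt (by positivity)
  have hB : B^2 = t+1 := Real.sq_sqrt ht1.le
  have hApos : 0 < A := Real.sqrt_pos.2 (by positivity)
  have hBpos : 0 < B := Real.sqrt_pos.2 ht1
  have hD1 : 0 < t+1+B := by linarith
  have hD2 : 0 < t+c+A := by linarith
  simp only [f1, hh]
  rw [← hAdef, ← hBdef]
  have key : (B-1)*(t+1+B)*(t+c+A) = A*B*(t+A) := by linear_combination (t+c+A)*hB - B*hA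
  rw [← sub_eq_zero, show (A*B)⁻¹ - (A⁻¹ - (t+1+B)⁻¹ + c*((t+1+B)*(t+c+A))⁻¹)
      = (A*B*(t+A) - (B-1)*(t+1+B)*(t+c+A))/(A*B*(t+1+B)*(t+c+A)) by field_simp; ring,
    key, sub_self, zero_div]

lemma key {c : ℝ} (hc : 0 < c) (hc1 : c < 1) :
    ∃ J : ℝ, (-Real.log c)/(4-c) < J ∧ J < (2*Real.log 4 - Real.log c)/(4-c) ∧
      (∫ t in Set.Ioi (0:ℝ), ((t+0)*(t+c)*(t+1)) ^ (-(1/2):ℝ))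
        = 2*Real.log 4 - Real.log c + c * J := by
  have h4c : (0:ℝ) < 4 - c := by linarith
  have hlogc : Real.log c < 0 := Real.log_neg hc hc1
  have hlog4 : 0 < Real.log 4 := Real.log_pos (by norm_num)
  have hG : Real.log 3 < Real.log 4 := Real.log_lt_log (by norm_num) (by norm_num)
  refine ⟨∫ t in Set.Ioi (0:ℝ), hh c t, ?_, ?_, ?_⟩
  · -- lower bound
    have hintl : IntegrableOn (fun t => (3:ℝ)⁻¹ * ((t+4/3)*(t+3*c/4))⁻¹) (Set.Ioi 0) :=
      (pair_intOn (by linarith) (by linarith)).const_mul _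
    have hmono : (∫ t in Set.Ioi (0:ℝ), (3:ℝ)⁻¹ * ((t+4/3)*(t+3*c/4))⁻¹)
        ≤ ∫ t in Set.Ioi (0:ℝ), hh c t :=
      setIntegral_mono_on hintl (hh_intOn hc hc1) measurableSet_Ioi
        (fun t ht => hh_lb hc ht)
    have hval : (∫ t in Set.Ioi (0:ℝ), (3:ℝ)⁻¹ * ((t+4/3)*(t+3*c/4))⁻¹)
        = (4*(2*(Real.log 4 - Real.log 3) - Real.log c))/(16-9*c) := by
      rw [integral_const_mul, pair_integral (by linarith) (by linarith)]
      rw [show Real.log (3*c/4) = Real.log 3 + Real.log c - Real.log 4 by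
        rw [Real.log_div (by positivity) (by norm_num),
          Real.log_mul (by norm_num) (ne_of_gt hc)]]
      rw [show Real.log (4/3 : ℝ) = Real.log 4 - Real.log 3 from
        Real.log_div (by norm_num) (by norm_num)]
      rw [inv_mul_eq_div, div_div]
      rw [div_eq_div_iff (by nlinarith : ((4/3 - 3*c/4)*3 : ℝ) ≠ 0) (by nlinarith : ((16 - 9*c):ℝ) ≠ 0)]
      ring
    refine lt_of_lt_of_le ?_ (hval ▸ hmono)
    rw [div_lt_div_iff₀ h4c (by linarith : (0:ℝ) < 16 - 9*c)]
    nlinarith [mul_pos (sub_pos.2 hG) h4c, mul_pos hc (neg_pos.2 hlogc)]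
  · -- upper bound
    have hintu : IntegrableOn (fun t => (2:ℝ)⁻¹ * ((t+2)*(t+c/2))⁻¹) (Set.Ioi 0) :=
      (pair_intOn (by linarith) (by linarith)).const_mul _
    have hmono : (∫ t in Set.Ioi (0:ℝ), hh c t)
        ≤ ∫ t in Set.Ioi (0:ℝ), (2:ℝ)⁻¹ * ((t+2)*(t+c/2))⁻¹ :=
      setIntegral_mono_on (hh_intOn hc hc1) hintu measurableSet_Ioi
        (fun t ht => hh_ub hc ht)
    have hval : (∫ t in Set.Ioi (0:ℝ), (2:ℝ)⁻¹ * ((t+2)*(t+c/2))⁻¹)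
        = (Real.log 4 - Real.log c)/(4-c) := by
      rw [integral_const_mul, pair_integral (by linarith) (by linarith)]
      rw [show Real.log (c/2 : ℝ) = Real.log c - Real.log 2 from
        Real.log_div (ne_of_gt hc) (by norm_num)]
      rw [show Real.log 4 = 2*Real.log 2 by
        rw [show (4:ℝ) = 2^2 by norm_num, Real.log_pow]; push_cast; ring]
      rw [inv_mul_eq_div, div_div]
      rw [div_eq_div_iff (by nlinarith : ((2 - c/2)*2 : ℝ) ≠ 0) (ne_of_gt h4c)]
      ring
    refine lt_of_le_of_lt (hval ▸ hmono) ?_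
    rw [div_lt_div_iff₀ h4c h4c]
    nlinarith
  · -- the integral identity
    rw [setIntegral_congr_fun measurableSet_Ioi
      (fun t (ht : t ∈ Set.Ioi (0:ℝ)) => integrand_eq hc ht)]
    rw [integral_add (f1_integral hc hc1).1 ((hh_intOn hc hc1).const_mul c),
      integral_const_mul, (f1_integral hc hc1).2]

end Helpers

/-- (F1e): asymptotic approximation of `K(k)` for `k` near `1`. -/
theorem K_asymp (k : ℝ) (hk0 : 0 < k) (hk1 : k < 1) :
    ∃ θ₁ : ℝ, 1 < θ₁ ∧ θ₁ < 4 ∧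
      K k = Real.log (4 / Real.sqrt (1 - k^2)) +
        ((1 - k^2) / (4 - (1 - k^2))) * Real.log (θ₁ / Real.sqrt (1 - k^2)) := by
  set c : ℝ := 1 - k^2 with hcdef
  have hc : 0 < c := by rw [hcdef]; nlinarith
  have hc1 : c < 1 := by rw [hcdef]; nlinarith
  clear_value c
  have h4c : (0:ℝ) < 4 - c := by linarith
  obtain ⟨J, hJl, hJu, hint⟩ := key hc hc1
  have hsc : 0 < Real.sqrt c := Real.sqrt_pos.2 hc
  set θ₁ : ℝ := Real.sqrt c * Real.exp ((4-c)/2 * J) with hθdef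
  have hθpos : 0 < θ₁ := by positivity
  have hlogθ : Real.log θ₁ = Real.log c / 2 + (4-c)/2 * J := by
    rw [hθdef, Real.log_mul (ne_of_gt hsc) (Real.exp_ne_zero _), Real.log_exp,
      Real.log_sqrt hc.le]
  have hl' : -Real.log c < J * (4-c) := by
    rw [div_lt_iff₀ h4c] at hJl; linarith
  have hu' : J * (4-c) < 2*Real.log 4 - Real.log c := by
    rw [lt_div_iff₀ h4c] at hJu; linarith
  refine ⟨θ₁, ?_, ?_, ?_⟩
  · have h0 : 0 < Real.log θ₁ := by
      rw [hlogθ]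
      have e : (4-c)/2*J = J*(4-c)/2 := by ring
      linarith
    have := Real.exp_lt_exp.2 h0
    rwa [Real.exp_zero, Real.exp_log hθpos] at this
  · have h0 : Real.log θ₁ < Real.log 4 := by
      rw [hlogθ]
      have e : (4-c)/2*J = J*(4-c)/2 := by ring
      linarith
    have := Real.exp_lt_exp.2 h0
    rwa [Real.exp_log hθpos, Real.exp_log (by norm_num : (0:ℝ) < 4)] at this
  · have e1 : Real.log (4 / Real.sqrt c) = Real.log 4 - Real.log c / 2 := by
      rw [Real.log_div (by norm_num) (ne_of_gt hsc), Real.log_sqrt hc.le]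
    have e2 : Real.log (θ₁ / Real.sqrt c) = (4-c)/2 * J := by
      rw [Real.log_div (ne_of_gt hθpos) (ne_of_gt hsc), hlogθ, Real.log_sqrt hc.le]
      ring
    show K k = Real.log (4 / Real.sqrt c) + (c / (4 - c)) * Real.log (θ₁ / Real.sqrt c)
    rw [K, RF, e1, e2, ← hcdef, hint]
    field_simp
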